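/- (Deterministic lower bound underlying Lemma 2.5, alternative case.) For every ν > 0, τ > 0, r ≥ 1 and t ≥ 0, the one-sided t Bayes factor satisfies BF₁₀(t|τ²,r;ν) ≥ (1+τ²)^{−(r+1/2)} · exp( (ν+1) τ² t² / (2 (t²+ν)(1+τ²)) ). (Indeed ((ν+1)/2)_k ≥ ((ν+1)/2)^k and (r+1/2)_k ≥ (1/2)_k for all k, so ₂F₁((ν+1)/2, r+1/2, 1/2; y²) ≥ exp((ν+1)y²/2), and the second bracket term is nonnegative when t ≥ 0.) -/
import Mathlib


open Real MeasureTheory Filter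

/-- Rising factorial (Pochhammer symbol) `(a)_k`. -/
noncomputable def risingFac (a : ℝ) (k : ℕ) : ℝ := (ascPochhammer ℝ k).eval a

/-- Gaussian hypergeometric function `₂F₁(a, b, c; x)` (as a series). -/
noncomputable def twoF1 (a b c x : ℝ) : ℝ :=
  ∑' k : ℕ, (risingFac a k * risingFac b k / (risingFac c k * (Nat.factorial k : ℝ))) * x ^ k

/-- The quantity `y = τ t / √((ν + t²)(1 + τ²))`. -/
noncomputable def tArg (t τ ν : ℝ) : ℝ :=
  τ * t / Real.sqrt ((ν + t ^ 2) * (1 + τ ^ 2))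

/-- One-sided `t` Bayes factor `BF₁₀(t | τ², r; ν)` with `ν` degrees of freedom. -/
noncomputable def BF10tOne (t τ r ν : ℝ) : ℝ :=
  (1 + τ ^ 2) ^ (-(r + 1 / 2)) *
    (twoF1 ((ν + 1) / 2) (r + 1 / 2) (1 / 2) (tArg t τ ν ^ 2)
      + 2 * tArg t τ ν * (Real.Gamma (ν / 2 + 1) / Real.Gamma ((ν + 1) / 2)) *
          (Real.Gamma (r + 1) / Real.Gamma (r + 1 / 2)) *
          twoF1 (ν / 2 + 1) (r + 1) (3 / 2) (tArg t τ ν ^ 2))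

lemma risingFac_zero (a : ℝ) : risingFac a 0 = 1 := by simp [risingFac]

lemma risingFac_succ (a : ℝ) (k : ℕ) : risingFac a (k+1) = risingFac a k * (a + k) := by
  simp [risingFac, ascPochhammer_succ_eval]

lemma risingFac_pos {a : ℝ} (ha : 0 < a) (k : ℕ) : 0 < risingFac a k := by
  induction k with
  | zero => simp [risingFac_zero]
  | succ n ih => rw [risingFac_succ]; positivity

lemma pow_le_risingFac {a : ℝ} (ha : 0 < a) (k : ℕ) : a ^ k ≤ risingFac a k := by
  induction k with
  | zero => simp [risingFac_zero]
  | succ n ih =>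
    rw [risingFac_succ, pow_succ]
    exact mul_le_mul ih (le_add_of_nonneg_right (by positivity)) ha.le (risingFac_pos ha n).le

lemma risingFac_mono {a b : ℝ} (ha : 0 < a) (hab : a ≤ b) (k : ℕ) :
    risingFac a k ≤ risingFac b k := by
  induction k with
  | zero => simp [risingFac_zero]
  | succ n ih =>
    rw [risingFac_succ, risingFac_succ]
    exact mul_le_mul ih (by linarith) (by positivity) (risingFac_pos (lt_of_lt_of_le ha hab) n).le

open Topology in
lemma aux_tendsto (p : ℝ) {q : ℝ} (hq : 0 < q) :
    Tendsto (fun k : ℕ => (p + k) / (q + k)) atTop (𝓝 1) := by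
  have heq : ∀ k : ℕ, (p + k) / (q + k) = 1 + (p - q) / (q + k) := by
    intro k
    have h : (0:ℝ) < q + k := by positivity
    field_simp
    ring
  simp_rw [heq]
  have h2 : Tendsto (fun k : ℕ => (q + (k:ℝ))) atTop atTop :=
    tendsto_atTop_add_const_left atTop q tendsto_natCast_atTop_atTop
  have h3 : Tendsto (fun k : ℕ => (p - q) / (q + k)) atTop (𝓝 0) :=
    Tendsto.div_atTop tendsto_const_nhds h2
  simpa using (tendsto_const_nhds.add h3)

lemma twoF1_summable {a b c x : ℝ} (ha : 0 < a) (hb : 0 < b) (hc : 0 < c)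
    (hx : 0 ≤ x) (hx1 : x < 1) :
    Summable (fun k : ℕ =>
      (risingFac a k * risingFac b k / (risingFac c k * (Nat.factorial k : ℝ))) * x ^ k) := by
  rcases eq_or_lt_of_le hx with hx0 | hx0
  · apply summable_of_ne_finset_zero (s := {0})
    intro k hk
    have : x ^ k = 0 := by
      rw [← hx0]
      exact zero_pow (by simpa using hk)
    simp [this]
  · set f : ℕ → ℝ := fun k =>
      (risingFac a k * risingFac b k / (risingFac c k * (Nat.factorial k : ℝ))) * x ^ k with hf
    have hfpos : ∀ k, 0 < f k := by
      intro k
      have := risingFac_pos ha k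
      have := risingFac_pos hb k
      have := risingFac_pos hc k
      have : (0:ℝ) < Nat.factorial k := by positivity
      positivity
    have hratio : ∀ k : ℕ, ‖f (k+1)‖ / ‖f k‖ = ((a + k) / (1 + k)) * ((b + k) / (c + k)) * x := by
      intro k
      rw [Real.norm_eq_abs, Real.norm_eq_abs, abs_of_pos (hfpos _), abs_of_pos (hfpos _)]
      have h1 := risingFac_pos ha k
      have h2 := risingFac_pos hb k
      have h3 := risingFac_pos hc k
      have h4 : (0:ℝ) < Nat.factorial k := by positivity
      have h5 : (0:ℝ) < x ^ k := by positivity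
      have h6 : (0:ℝ) < 1 + (k:ℝ) := by positivity
      have h7 : (0:ℝ) < c + (k:ℝ) := by positivity
      simp only [hf, risingFac_succ, pow_succ, Nat.factorial_succ]
      push_cast
      field_simp
      ring
    apply summable_of_ratio_test_tendsto_lt_one hx1
    · exact Filter.Eventually.of_forall fun k => (hfpos k).ne'
    · simp_rw [hratio]
      have := ((aux_tendsto a one_pos).mul (aux_tendsto b hc)).mul_const x
      simpa using this

lemma twoF1_nonneg {a b c x : ℝ} (ha : 0 < a) (hb : 0 < b) (hc : 0 < c) (hx : 0 ≤ x) :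
    0 ≤ twoF1 a b c x := by
  apply tsum_nonneg
  intro k
  have h1 := risingFac_pos ha k
  have h2 := risingFac_pos hb k
  have h3 := risingFac_pos hc k
  have h4 : (0:ℝ) < Nat.factorial k := by positivity
  positivity

lemma exp_le_twoF1 {a b x : ℝ} (ha : 0 < a) (hb : 1/2 ≤ b) (hx : 0 ≤ x) (hx1 : x < 1) :
    Real.exp (a * x) ≤ twoF1 a b (1/2) x := by
  rw [Real.exp_eq_exp_ℝ, NormedSpace.exp_eq_tsum_div, twoF1]
  have hb0 : (0:ℝ) < b := lt_of_lt_of_le one_half_pos hb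
  refine Summable.tsum_le_tsum ?_ (Real.summable_pow_div_factorial _)
    (twoF1_summable ha hb0 one_half_pos hx hx1)
  intro k
  have h1 := risingFac_pos ha k
  have h2 := risingFac_pos hb0 k
  have h3 := risingFac_pos (one_half_pos (α := ℝ)) k
  have key : a ^ k ≤ risingFac a k * risingFac b k / risingFac (1/2) k := by
    rw [le_div_iff₀ h3]
    exact mul_le_mul (pow_le_risingFac ha k) (risingFac_mono one_half_pos hb k) h3.le h1.le
  calc (a * x) ^ k / (Nat.factorial k : ℝ)
      = a ^ k * (x ^ k / (Nat.factorial k : ℝ)) := by rw [mul_pow]; ring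
    _ ≤ (risingFac a k * risingFac b k / risingFac (1/2) k) *
          (x ^ k / (Nat.factorial k : ℝ)) := by
        apply mul_le_mul_of_nonneg_right key
        positivity
    _ = (risingFac a k * risingFac b k / (risingFac (1/2) k * (Nat.factorial k : ℝ))) * x ^ k := by
        ring

/-- Deterministic lower bound underlying Lemma 2.5, alternative case. -/
theorem lemma25_alternative_lower_bound (ν τ r t : ℝ) (hν : 0 < ν) (hτ : 0 < τ)
    (hr : 1 ≤ r) (ht : 0 ≤ t) :
    (1 + τ ^ 2) ^ (-(r + 1 / 2)) *
        Real.exp ((ν + 1) * τ ^ 2 * t ^ 2 / (2 * (t ^ 2 + ν) * (1 + τ ^ 2)))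
      ≤ BF10tOne t τ r ν := by
  have hD : (0:ℝ) < (ν + t ^ 2) * (1 + τ ^ 2) := by positivity
  set y : ℝ := tArg t τ ν with hy
  have hy0 : 0 ≤ y := div_nonneg (mul_nonneg hτ.le ht) (Real.sqrt_nonneg _)
  have hx2 : y ^ 2 = τ ^ 2 * t ^ 2 / ((ν + t ^ 2) * (1 + τ ^ 2)) := by
    rw [hy, tArg, div_pow, Real.sq_sqrt hD.le, mul_pow]
  have hx : (0:ℝ) ≤ y ^ 2 := sq_nonneg y
  have hx1 : y ^ 2 < 1 := by
    rw [hx2, div_lt_one hD]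
    nlinarith [sq_nonneg t, sq_nonneg τ, mul_pos hν (mul_pos hτ hτ)]
  have hE : (ν + 1) * τ ^ 2 * t ^ 2 / (2 * (t ^ 2 + ν) * (1 + τ ^ 2))
      = ((ν + 1) / 2) * y ^ 2 := by
    rw [hx2]
    have h1 : (t ^ 2 + ν) ≠ 0 := by positivity
    have h2 : (1 + τ ^ 2) ≠ 0 := by positivity
    field_simp
    ring
  have hA : (0:ℝ) < (ν + 1) / 2 := by linarith
  have hB : (1:ℝ)/2 ≤ r + 1/2 := by linarith
  have hmain : Real.exp (((ν + 1) / 2) * y ^ 2)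
      ≤ twoF1 ((ν + 1) / 2) (r + 1/2) (1/2) (y ^ 2) := exp_le_twoF1 hA hB hx hx1
  have hS : 0 ≤ 2 * y * (Real.Gamma (ν / 2 + 1) / Real.Gamma ((ν + 1) / 2)) *
      (Real.Gamma (r + 1) / Real.Gamma (r + 1 / 2)) *
      twoF1 (ν / 2 + 1) (r + 1) (3 / 2) (y ^ 2) := by
    have g1 := Real.Gamma_pos_of_pos (show (0:ℝ) < ν / 2 + 1 by linarith)
    have g2 := Real.Gamma_pos_of_pos (show (0:ℝ) < (ν + 1) / 2 by linarith)
    have g3 := Real.Gamma_pos_of_pos (show (0:ℝ) < r + 1 by linarith)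
    have g4 := Real.Gamma_pos_of_pos (show (0:ℝ) < r + 1 / 2 by linarith)
    have hT := twoF1_nonneg (show (0:ℝ) < ν / 2 + 1 by linarith)
      (show (0:ℝ) < r + 1 by linarith) (show (0:ℝ) < 3 / 2 by norm_num) hx
    positivity
  have hP : (0:ℝ) < (1 + τ ^ 2) ^ (-(r + 1 / 2)) :=
    Real.rpow_pos_of_pos (by positivity) _
  rw [BF10tOne]
  apply mul_le_mul_of_nonneg_left _ hP.le
  rw [hE]
  norm_num only at hmain hS ⊢
  linarith
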